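/- Let λ = λ(n) and κ = κ(n) be positive integers with κ(n) ≥ 2, let A_n ⊆ [n] and X_n ⊆ A_n with |X_n| = λ(n), and suppose that for each x ∈ X_n there is a set D_x of κ(n) positive integers such that for every d ∈ D_x, either S⁺_{A_n}(x) or S⁻_{A_n}(x) contains a 4-term arithmetic progression with common difference d. If p = p(n) ∈ [0,1] satisfies p = ω(max{(λ(n)·κ(n))^{−1/2}, κ(n)^{−1}}), then the probability that A_n ∪ [n]_{p(n)} is Schur tends to 1 as n → ∞. -/

import Mathlib

/-!
Each pair `(x, d)` with `x ∈ X` and `d ∈ D_x` gives a two-element set `{d, x ± d}`. If the random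
set contains it, then `A ∪ [n]_p` contains `x`, `d`, `x ± d`, a 4-AP `a + k d` in `S^±_A(x)` and
the points `x ± (a + k d)`, and a finite check shows that these eleven points cannot be
2-coloured without a monochromatic Schur triple. The number `N` of covered pairs has mean
`μ = λκp²`. The set of a pair equals that of at most 2 pairs and meets those of at most
6 pairs per `x`, so `E[N²] ≤ μ² + μ(2 + 6λp)`, and the second moment method gives
`P(N > 0) ≥ 1 - 2/(λκp²) - 6/(κp)`, which tends to 1 by the hypothesis on `p`.
-/

open Filter

/-- A set `S` is *Schur* if every 2-colouring of its elements yields a monochromatic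
triple `x, y, z ∈ S` (not necessarily distinct) with `x + y = z`. -/
def IsSchur {α : Type*} [Add α] (S : Set α) : Prop :=
  ∀ f : α → Bool, ∃ x ∈ S, ∃ y ∈ S, ∃ z ∈ S, f x = f y ∧ f y = f z ∧ x + y = z

/-- The probability that the random subset `[m]_p` of `{1, …, m}`, in which each element is
included independently with probability `p`, lies in the event `E`. -/
noncomputable def randProb (m : ℕ) (p : ℝ) (E : Set (Finset ℕ)) : ℝ :=
  ∑ S ∈ (Finset.Icc 1 m).powerset,
    E.indicator (fun T => p ^ T.card * (1 - p) ^ (m - T.card)) S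

/-- `S⁺_A(x) = {y ∈ A : x + y ∈ A}`. -/
def Splus (A : Finset ℕ) (x : ℕ) : Finset ℕ := A.filter fun y => x + y ∈ A

/-- `S⁻_A(x) = {y ∈ A : x − y ∈ A}` (the condition `y < x` ensures the difference `x − y`
is a genuine positive integer). -/
def Sminus (A : Finset ℕ) (x : ℕ) : Finset ℕ := A.filter fun y => y < x ∧ x - y ∈ A

/-- `S` contains a 4-term arithmetic progression with common difference `d`. -/
def HasAPWithDiff (S : Finset ℕ) (d : ℕ) : Prop :=
  ∃ a, a ∈ S ∧ a + d ∈ S ∧ a + 2 * d ∈ S ∧ a + 3 * d ∈ S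


open Finset

def IsSumTriple (u v w : ℕ) : Prop := u + v = w ∨ u + w = v ∨ v + w = u

-- The colours of `aₖ = a + k d`, `bₖ = x ± aₖ` (`k ≤ 3`), `x`, `d` and `e = x ± d`; the
-- disjuncts are the Schur triples among these eleven points.
set_option synthInstance.maxSize 2048 in
theorem not_monochromatic_config : ∀ a₀ a₁ a₂ a₃ b₀ b₁ b₂ b₃ x d e : Bool,
    (a₀ = d ∧ d = a₁) ∨ (a₁ = d ∧ d = a₂) ∨ (a₂ = d ∧ d = a₃) ∨
    (b₀ = d ∧ d = b₁) ∨ (b₁ = d ∧ d = b₂) ∨ (b₂ = d ∧ d = b₃) ∨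
    (a₀ = x ∧ x = b₀) ∨ (a₁ = x ∧ x = b₁) ∨ (a₂ = x ∧ x = b₂) ∨ (a₃ = x ∧ x = b₃) ∨
    (a₀ = e ∧ e = b₁) ∨ (a₁ = e ∧ e = b₂) ∨ (a₂ = e ∧ e = b₃) ∨ (x = d ∧ d = e) := by
  decide

theorem isSchur_of_config {U : Set ℕ} {a b : ℕ → ℕ} {x d e : ℕ}
    (ha : ∀ k ≤ 3, a k ∈ U) (hb : ∀ k ≤ 3, b k ∈ U) (hx : x ∈ U) (hd : d ∈ U) (he : e ∈ U)
    (had : ∀ k < 3, IsSumTriple (a k) d (a (k + 1)))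
    (hbd : ∀ k < 3, IsSumTriple (b k) d (b (k + 1)))
    (hax : ∀ k ≤ 3, IsSumTriple (a k) x (b k))
    (hae : ∀ k < 3, IsSumTriple (a k) e (b (k + 1)))
    (hxd : IsSumTriple x d e) : IsSchur U := by
  intro f
  by_contra hfree
  have mono : ∀ {u v w}, u ∈ U → v ∈ U → w ∈ U → IsSumTriple u v w →
      ¬(f u = f v ∧ f v = f w) := by
    rintro u v w hu hv hw (h | h | h) ⟨huv, hvw⟩
    · exact hfree ⟨u, hu, v, hv, w, hw, huv, hvw, h⟩
    · exact hfree ⟨u, hu, w, hw, v, hv, huv.trans hvw, hvw.symm, h⟩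
    · exact hfree ⟨v, hv, w, hw, u, hu, hvw, (huv.trans hvw).symm, h⟩
  rcases not_monochromatic_config (f (a 0)) (f (a 1)) (f (a 2)) (f (a 3)) (f (b 0)) (f (b 1))
      (f (b 2)) (f (b 3)) (f x) (f d) (f e) with
    h | h | h | h | h | h | h | h | h | h | h | h | h | h
  · exact mono (ha 0 (by norm_num)) hd (ha 1 (by norm_num)) (had 0 (by norm_num)) h
  · exact mono (ha 1 (by norm_num)) hd (ha 2 (by norm_num)) (had 1 (by norm_num)) h
  · exact mono (ha 2 (by norm_num)) hd (ha 3 (by norm_num)) (had 2 (by norm_num)) h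
  · exact mono (hb 0 (by norm_num)) hd (hb 1 (by norm_num)) (hbd 0 (by norm_num)) h
  · exact mono (hb 1 (by norm_num)) hd (hb 2 (by norm_num)) (hbd 1 (by norm_num)) h
  · exact mono (hb 2 (by norm_num)) hd (hb 3 (by norm_num)) (hbd 2 (by norm_num)) h
  · exact mono (ha 0 (by norm_num)) hx (hb 0 (by norm_num)) (hax 0 (by norm_num)) h
  · exact mono (ha 1 (by norm_num)) hx (hb 1 (by norm_num)) (hax 1 (by norm_num)) h
  · exact mono (ha 2 (by norm_num)) hx (hb 2 (by norm_num)) (hax 2 (by norm_num)) h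
  · exact mono (ha 3 (by norm_num)) hx (hb 3 (by norm_num)) (hax 3 (by norm_num)) h
  · exact mono (ha 0 (by norm_num)) he (hb 1 (by norm_num)) (hae 0 (by norm_num)) h
  · exact mono (ha 1 (by norm_num)) he (hb 2 (by norm_num)) (hae 1 (by norm_num)) h
  · exact mono (ha 2 (by norm_num)) he (hb 3 (by norm_num)) (hae 2 (by norm_num)) h
  · exact mono hx hd he hxd h

theorem HasAPWithDiff.exists_forall_le_three {S : Finset ℕ} {d : ℕ} (h : HasAPWithDiff S d) :
    ∃ a, ∀ k ≤ 3, a + k * d ∈ S := by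
  obtain ⟨a, h₀, h₁, h₂, h₃⟩ := h
  refine ⟨a, fun k hk => ?_⟩
  interval_cases k <;> simpa

theorem isSchur_of_hasAPWithDiff_splus {U : Set ℕ} {A : Finset ℕ} {x d : ℕ} (hAU : ↑A ⊆ U)
    (hx : x ∈ A) (hd : d ∈ U) (he : x + d ∈ U) (hap : HasAPWithDiff (Splus A x) d) :
    IsSchur U := by
  obtain ⟨a, ha⟩ := hap.exists_forall_le_three
  simp only [Splus, mem_filter] at ha
  refine isSchur_of_config (a := fun k => a + k * d) (b := fun k => x + (a + k * d))
    (fun k hk => hAU (ha k hk).1) (fun k hk => hAU (ha k hk).2) (hAU hx) hd he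
    (fun k _ => Or.inl ?_) (fun k _ => Or.inl ?_) (fun k _ => Or.inl ?_)
    (fun k _ => Or.inl ?_) (Or.inl rfl) <;> ring

theorem isSchur_of_hasAPWithDiff_sminus {U : Set ℕ} {A : Finset ℕ} {x d : ℕ} (hAU : ↑A ⊆ U)
    (hx : x ∈ A) (hd : d ∈ U) (he : x - d ∈ U) (hap : HasAPWithDiff (Sminus A x) d) :
    IsSchur U := by
  obtain ⟨a, ha⟩ := hap.exists_forall_le_three
  simp only [Sminus, mem_filter] at ha
  have hlt : a + 3 * d < x := (ha 3 le_rfl).2.1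
  refine isSchur_of_config (a := fun k => a + k * d) (b := fun k => x - (a + k * d))
    (fun k hk => hAU (ha k hk).1) (fun k hk => hAU (ha k hk).2.2) (hAU hx) hd he
    (fun k _ => Or.inl ?_) (fun k hk => Or.inr (Or.inr ?_)) (fun k hk => Or.inr (Or.inl ?_))
    (fun k hk => Or.inr (Or.inl ?_)) (Or.inr (Or.inr ?_))
  · ring
  all_goals first | omega | interval_cases k <;> omega

open scoped Classical in
/-- The third element, besides `x ∈ A` and `d`, of the configuration built from a 4-AP with
difference `d` in `S⁺_A(x)` (then it is `x + d`) or in `S⁻_A(x)` (then it is `x - d`). -/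
noncomputable def schurPartner (A : Finset ℕ) (x d : ℕ) : ℕ :=
  if HasAPWithDiff (Splus A x) d then x + d else x - d

theorem isSchur_of_schurPartner {U : Set ℕ} {A : Finset ℕ} {x d : ℕ} (hAU : ↑A ⊆ U)
    (hx : x ∈ A) (hap : HasAPWithDiff (Splus A x) d ∨ HasAPWithDiff (Sminus A x) d)
    (hd : d ∈ U) (he : schurPartner A x d ∈ U) : IsSchur U := by
  unfold schurPartner at he
  split_ifs at he with hplus
  · exact isSchur_of_hasAPWithDiff_splus hAU hx hd he hplus
  · exact isSchur_of_hasAPWithDiff_sminus hAU hx hd he (hap.resolve_left hplus)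

theorem schurPartner_spec {A : Finset ℕ} {n x d : ℕ} (hA : A ⊆ Icc 1 n) (hx : x ∈ A)
    (hap : HasAPWithDiff (Splus A x) d ∨ HasAPWithDiff (Sminus A x) d) :
    d < schurPartner A x d ∧ schurPartner A x d ≤ n ∧
      (schurPartner A x d = x + d ∨ schurPartner A x d + d = x) := by
  have hA' : ∀ y ∈ A, 1 ≤ y ∧ y ≤ n := fun y hy => mem_Icc.mp (hA hy)
  have hx' := hA' x hx
  unfold schurPartner
  split_ifs with hplus
  · obtain ⟨a, ha, -, -, ha₃⟩ := hplus
    simp only [Splus, mem_filter] at ha ha₃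
    have hlast := hA' _ ha₃.2
    omega
  · obtain ⟨a, ha, -, -, ha₃⟩ := hap.resolve_left hplus
    simp only [Sminus, mem_filter] at ha ha₃
    have hfirst := hA' _ ha.1
    omega

section RandomSubset

variable {n : ℕ} {p : ℝ}

def subsetWeight (n : ℕ) (p : ℝ) (S : Finset ℕ) : ℝ := p ^ #S * (1 - p) ^ (n - #S)

theorem subsetWeight_nonneg (hp₀ : 0 ≤ p) (hp₁ : p ≤ 1) (S : Finset ℕ) :
    0 ≤ subsetWeight n p S :=
  mul_nonneg (pow_nonneg hp₀ _) (pow_nonneg (sub_nonneg.mpr hp₁) _)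

theorem sum_subsetWeight_of_subset {T : Finset ℕ} (hT : T ⊆ Icc 1 n) :
    ∑ S ∈ (Icc 1 n).powerset, (if T ⊆ S then subsetWeight n p S else 0) = p ^ #T := by
  have hn : #(Icc 1 n) = n := by simp
  have hinj : Set.InjOn (T ∪ ·) ((Icc 1 n \ T).powerset : Set (Finset ℕ)) := by
    intro R hR R' hR' h
    simp only [coe_powerset, Set.mem_preimage, Set.mem_powerset_iff, coe_subset] at hR hR'
    rw [← union_sdiff_cancel_left (disjoint_of_subset_right hR disjoint_sdiff),
      ← union_sdiff_cancel_left (disjoint_of_subset_right hR' disjoint_sdiff)]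
    exact congrArg (· \ T) h
  rw [← sum_filter, ← Icc_eq_filter_powerset, Icc_eq_image_powerset hT, sum_image hinj]
  calc ∑ R ∈ (Icc 1 n \ T).powerset, subsetWeight n p (T ∪ R)
      = ∑ R ∈ (Icc 1 n \ T).powerset,
          p ^ #T * (p ^ #R * (1 - p) ^ (#(Icc 1 n \ T) - #R)) := by
        refine sum_congr rfl fun R hR => ?_
        have hR' := mem_powerset.mp hR
        have hcard := card_le_card hR'
        rw [subsetWeight, card_union_of_disjoint (disjoint_of_subset_right hR' disjoint_sdiff),
          card_sdiff_of_subset hT, hn, pow_add, mul_assoc]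
        congr 3
        have hT' := card_le_card hT
        omega
    _ = p ^ #T := by rw [← mul_sum, sum_pow_mul_eq_add_pow, add_sub_cancel, one_pow, mul_one]

theorem randProb_nonneg (hp₀ : 0 ≤ p) (hp₁ : p ≤ 1) (E : Set (Finset ℕ)) :
    0 ≤ randProb n p E :=
  sum_nonneg fun S _ => Set.indicator_nonneg (fun T _ => subsetWeight_nonneg hp₀ hp₁ T) S

theorem randProb_le_one (hp₀ : 0 ≤ p) (hp₁ : p ≤ 1) (E : Set (Finset ℕ)) :
    randProb n p E ≤ 1 := by
  calc randProb n p E ≤ ∑ S ∈ (Icc 1 n).powerset, subsetWeight n p S :=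
        sum_le_sum fun S _ =>
          Set.indicator_le_self' (fun T _ => subsetWeight_nonneg hp₀ hp₁ T) S
    _ = 1 := by simpa using sum_subsetWeight_of_subset (p := p) (empty_subset (Icc 1 n))

end RandomSubset

section SecondMoment

variable {n : ℕ} {p : ℝ} {ι : Type*} {I : Finset ι} {T : ι → Finset ℕ}

/-- Cauchy–Schwarz form of the second moment method for the number
`N S = #{i ∈ I | T i ⊆ S}` of sets `T i` covered by `S = [n]_p`. -/
theorem sq_sum_pow_card_le_randProb_mul (hp₀ : 0 ≤ p) (hp₁ : p ≤ 1)
    (hT : ∀ i ∈ I, T i ⊆ Icc 1 n) {E : Set (Finset ℕ)} (hE : ∀ S, (∃ i ∈ I, T i ⊆ S) → S ∈ E) :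
    (∑ i ∈ I, p ^ #(T i)) ^ 2 ≤ randProb n p E * ∑ i ∈ I, ∑ j ∈ I, p ^ #(T i ∪ T j) := by
  set w := subsetWeight n p
  set N : Finset ℕ → ℝ := fun S => ∑ i ∈ I, if T i ⊆ S then 1 else 0
  have hfirst : ∑ S ∈ (Icc 1 n).powerset, w S * N S = ∑ i ∈ I, p ^ #(T i) := by
    simp only [N, mul_sum, mul_ite, mul_one, mul_zero]
    rw [sum_comm]
    exact sum_congr rfl fun i hi => sum_subsetWeight_of_subset (hT i hi)
  have hsecond : ∑ S ∈ (Icc 1 n).powerset, w S * N S ^ 2 =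
      ∑ i ∈ I, ∑ j ∈ I, p ^ #(T i ∪ T j) := by
    have hNsq : ∀ S, N S ^ 2 = ∑ i ∈ I, ∑ j ∈ I, if T i ∪ T j ⊆ S then 1 else 0 := fun S => by
      simp only [N, sq, sum_mul_sum, ite_zero_mul_ite_zero, mul_one, union_subset_iff]
    simp only [hNsq, mul_sum, mul_ite, mul_one, mul_zero]
    rw [sum_comm]
    refine sum_congr rfl fun i hi => ?_
    rw [sum_comm]
    exact sum_congr rfl fun j hj => sum_subsetWeight_of_subset (union_subset (hT i hi) (hT j hj))
  have hw : ∀ S, 0 ≤ w S := subsetWeight_nonneg hp₀ hp₁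
  have hcover : ∀ S ∈ (Icc 1 n).powerset,
      (if N S = 0 then 0 else w S) ≤ E.indicator w S := by
    intro S _
    split_ifs with hN
    · exact Set.indicator_nonneg (fun S _ => hw S) S
    · obtain ⟨i, hi, hTS⟩ : ∃ i ∈ I, T i ⊆ S := by
        by_contra! h
        exact hN (sum_eq_zero fun i hi => if_neg (h i hi))
      rw [Set.indicator_of_mem (hE S ⟨i, hi, hTS⟩)]
  rw [← hfirst, ← hsecond]
  calc (∑ S ∈ (Icc 1 n).powerset, w S * N S) ^ 2
      ≤ (∑ S ∈ (Icc 1 n).powerset, if N S = 0 then 0 else w S) *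
          ∑ S ∈ (Icc 1 n).powerset, w S * N S ^ 2 := by
        refine sum_sq_le_sum_mul_sum_of_sq_le_mul _ (fun S _ => ?_)
          (fun S _ => mul_nonneg (hw S) (sq_nonneg _)) (fun S _ => ?_)
        · split_ifs
          exacts [le_rfl, hw S]
        · split_ifs with hN
          · simp [hN]
          · exact le_of_eq (by ring)
    _ ≤ randProb n p E * ∑ S ∈ (Icc 1 n).powerset, w S * N S ^ 2 :=
        mul_le_mul_of_nonneg_right (sum_le_sum hcover)
          (sum_nonneg fun S _ => mul_nonneg (hw S) (sq_nonneg _))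

/-- The second moment method: if `E[N²] ≤ E[N]² + c E[N]`, then `P(N > 0) ≥ 1 - c / E[N]`. -/
theorem one_sub_div_le_randProb (hp₀ : 0 ≤ p) (hp₁ : p ≤ 1) (hT : ∀ i ∈ I, T i ⊆ Icc 1 n)
    {E : Set (Finset ℕ)} (hE : ∀ S, (∃ i ∈ I, T i ⊆ S) → S ∈ E) {c : ℝ} (hc : 0 ≤ c)
    (hμ : 0 < ∑ i ∈ I, p ^ #(T i))
    (hvar : ∑ i ∈ I, ∑ j ∈ I, p ^ #(T i ∪ T j) ≤
      (∑ i ∈ I, p ^ #(T i)) ^ 2 + (∑ i ∈ I, p ^ #(T i)) * c) :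
    1 - c / ∑ i ∈ I, p ^ #(T i) ≤ randProb n p E := by
  set μ := ∑ i ∈ I, p ^ #(T i)
  have hsq := (sq_sum_pow_card_le_randProb_mul hp₀ hp₁ hT hE).trans
    (mul_le_mul_of_nonneg_left hvar (randProb_nonneg hp₀ hp₁ E))
  have hR := randProb_le_one (n := n) hp₀ hp₁ E
  rw [sub_le_iff_le_add, ← sub_le_iff_le_add', le_div_iff₀ hμ]
  nlinarith

end SecondMoment

section Counting

variable {p : ℝ}

theorem pow_card_union_le (hp₀ : 0 ≤ p) (hp₁ : p ≤ 1) {s t : Finset ℕ} (hs : #s = 2)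
    (ht : #t = 2) :
    p ^ #(s ∪ t) ≤ p ^ 4 + (if s = t then p ^ 2 else 0) + (if Disjoint s t then 0 else p ^ 3) := by
  have h₃ := pow_nonneg hp₀ 3
  have h₄ := pow_nonneg hp₀ 4
  by_cases hdisj : Disjoint s t
  · have hne : s ≠ t := fun h => by simp [h, ← card_eq_zero, ht] at hdisj
    rw [card_union_of_disjoint hdisj, hs, ht, if_neg hne, if_pos hdisj]
    norm_num
  by_cases heq : s = t
  · subst heq
    rw [union_self, hs, if_pos rfl, if_neg hdisj]
    linarith
  have hlt : #s < #(s ∪ t) := by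
    refine card_lt_card (Finset.ssubset_iff_subset_ne.mpr ⟨subset_union_left, fun h => heq ?_⟩)
    exact (eq_of_subset_of_card_le (h ▸ subset_union_right) (by omega)).symm
  rw [if_neg heq, if_neg hdisj]
  linarith [pow_le_pow_of_le_one hp₀ hp₁ (show 3 ≤ #(s ∪ t) by omega)]

variable {I : Finset (ℕ × ℕ)} {e : ℕ × ℕ → ℕ}

theorem card_filter_pair_eq_le (he : ∀ j ∈ I, j.2 < e j ∧ (e j = j.1 + j.2 ∨ e j + j.2 = j.1))
    {i : ℕ × ℕ} (hi : i ∈ I) : #{j ∈ I | ({i.2, e i} : Finset ℕ) = {j.2, e j}} ≤ 2 := by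
  refine (card_le_card (t := {(e i - i.2, i.2), (e i + i.2, i.2)}) fun j hj => ?_).trans
    card_le_two
  rw [mem_filter] at hj
  obtain ⟨hj, hij⟩ := hj
  have hmem : ∀ y, y = i.2 ∨ y = e i ↔ y = j.2 ∨ y = e j := by
    simpa [Finset.ext_iff] using hij
  have hi' := he i hi
  have hj' := he j hj
  have h₁ := (hmem i.2).mp (Or.inl rfl)
  have h₂ := (hmem (e i)).mp (Or.inr rfl)
  have h₃ := (hmem j.2).mpr (Or.inl rfl)
  simp only [mem_insert, mem_singleton, Prod.ext_iff]
  omega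

theorem card_filter_not_disjoint_pair_le
    (he : ∀ j ∈ I, j.2 < e j ∧ (e j = j.1 + j.2 ∨ e j + j.2 = j.1)) (i : ℕ × ℕ) :
    #{j ∈ I | ¬Disjoint ({i.2, e i} : Finset ℕ) {j.2, e j}} ≤ 6 * #(I.image Prod.fst) := by
  have hsub : {j ∈ I | ¬Disjoint ({i.2, e i} : Finset ℕ) {j.2, e j}} ⊆
      (I.image Prod.fst).biUnion fun x =>
        ({i.2, e i, i.2 - x, e i - x, x - i.2, x - e i} : Finset ℕ).image (x, ·) := by
    intro j hj
    obtain ⟨hj, hij⟩ := mem_filter.mp hj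
    obtain ⟨y, hyi, hyj⟩ := not_disjoint_iff.mp hij
    have hj' := he j hj
    simp only [mem_insert, mem_singleton] at hyi hyj
    simp only [mem_biUnion, mem_image, mem_insert, mem_singleton]
    exact ⟨j.1, ⟨j, hj, rfl⟩, j.2, by omega, rfl⟩
  calc _ ≤ _ := card_le_card hsub
    _ ≤ ∑ x ∈ I.image Prod.fst, 6 :=
        card_biUnion_le.trans (sum_le_sum fun x _ => card_image_le.trans card_le_six)
    _ = 6 * #(I.image Prod.fst) := by rw [sum_const, smul_eq_mul, mul_comm]

theorem sum_sum_pow_card_union_le (hp₀ : 0 ≤ p) (hp₁ : p ≤ 1)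
    (he : ∀ j ∈ I, j.2 < e j ∧ (e j = j.1 + j.2 ∨ e j + j.2 = j.1)) :
    ∑ i ∈ I, ∑ j ∈ I, p ^ #(({i.2, e i} : Finset ℕ) ∪ {j.2, e j}) ≤
      (#I * p ^ 2) ^ 2 + #I * p ^ 2 * (2 + 6 * #(I.image Prod.fst) * p) := by
  have hcard : ∀ j ∈ I, #({j.2, e j} : Finset ℕ) = 2 := fun j hj =>
    card_pair (he j hj).1.ne
  have hrow : ∀ i ∈ I, ∑ j ∈ I, p ^ #(({i.2, e i} : Finset ℕ) ∪ {j.2, e j}) ≤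
      #I * p ^ 4 + 2 * p ^ 2 + 6 * #(I.image Prod.fst) * p ^ 3 := by
    intro i hi
    calc _ ≤ ∑ j ∈ I, (p ^ 4 + (if ({i.2, e i} : Finset ℕ) = {j.2, e j} then p ^ 2 else 0) +
          (if ¬Disjoint ({i.2, e i} : Finset ℕ) {j.2, e j} then p ^ 3 else 0)) :=
          sum_le_sum fun j hj => by
            rw [ite_not]; exact pow_card_union_le hp₀ hp₁ (hcard i hi) (hcard j hj)
      _ = #I * p ^ 4 + #{j ∈ I | ({i.2, e i} : Finset ℕ) = {j.2, e j}} * p ^ 2 +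
          #{j ∈ I | ¬Disjoint ({i.2, e i} : Finset ℕ) {j.2, e j}} * p ^ 3 := by
          simp only [sum_add_distrib, ← sum_filter, sum_const, nsmul_eq_mul]
      _ ≤ _ := by
          gcongr
          · exact_mod_cast card_filter_pair_eq_le he hi
          · exact_mod_cast card_filter_not_disjoint_pair_le he i
  calc _ ≤ ∑ _i ∈ I, (#I * p ^ 4 + 2 * p ^ 2 + 6 * #(I.image Prod.fst) * p ^ 3 : ℝ) :=
        sum_le_sum hrow
    _ = _ := by rw [sum_const, nsmul_eq_mul]; ring

end Counting

theorem exists_finset_prod_of_forall_exists_card {X : Finset ℕ} {κ : ℕ} {P : ℕ → ℕ → Prop}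
    (hD : ∀ x ∈ X, ∃ D : Finset ℕ, #D = κ ∧ ∀ d ∈ D, P x d) :
    ∃ I : Finset (ℕ × ℕ), #I = #X * κ ∧ I.image Prod.fst ⊆ X ∧ ∀ j ∈ I, P j.1 j.2 := by
  choose! D hDcard hDP using hD
  refine ⟨X.biUnion fun x => {x} ×ˢ D x, ?_, fun x hx => ?_, fun j hj => ?_⟩
  · rw [card_biUnion fun x _ y _ hxy => disjoint_product.mpr (Or.inl (disjoint_singleton.mpr hxy))]
    simp [sum_const_nat fun x hx => hDcard x hx]
  · obtain ⟨j, hj, rfl⟩ := mem_image.mp hx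
    simp only [mem_biUnion, mem_product, mem_singleton] at hj
    obtain ⟨x, hx, rfl, -⟩ := hj
    exact hx
  · simp only [mem_biUnion, mem_product, mem_singleton] at hj
    obtain ⟨x, hx, hj₁, hj₂⟩ := hj
    exact hj₁ ▸ hDP x hx j.2 (hj₁ ▸ hj₂)

theorem one_sub_le_randProb_isSchur {n κ : ℕ} {A X : Finset ℕ} {p : ℝ} (hp₀ : 0 < p)
    (hp₁ : p ≤ 1) (hX : X.Nonempty) (hκ : 1 ≤ κ) (hA : A ⊆ Icc 1 n) (hXA : X ⊆ A)
    (hD : ∀ x ∈ X, ∃ D : Finset ℕ, #D = κ ∧ ∀ d ∈ D, 1 ≤ d ∧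
      (HasAPWithDiff (Splus A x) d ∨ HasAPWithDiff (Sminus A x) d)) :
    1 - (2 / (#X * κ * p ^ 2) + 6 / (κ * p)) ≤
      randProb n p {S : Finset ℕ | IsSchur ((↑A ∪ ↑S : Set ℕ))} := by
  obtain ⟨I, hIcard, hIX, hI⟩ := exists_finset_prod_of_forall_exists_card hD
  set e : ℕ × ℕ → ℕ := fun j => schurPartner A j.1 j.2
  have hxA : ∀ j ∈ I, j.1 ∈ A := fun j hj => hXA (hIX (mem_image_of_mem _ hj))
  have hspec : ∀ j ∈ I, j.2 < e j ∧ e j ≤ n ∧ (e j = j.1 + j.2 ∨ e j + j.2 = j.1) :=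
    fun j hj => schurPartner_spec hA (hxA j hj) (hI j hj).2
  have he : ∀ j ∈ I, j.2 < e j ∧ (e j = j.1 + j.2 ∨ e j + j.2 = j.1) :=
    fun j hj => ⟨(hspec j hj).1, (hspec j hj).2.2⟩
  have hT : ∀ j ∈ I, ({j.2, e j} : Finset ℕ) ⊆ Icc 1 n := fun j hj => by
    have hd := (hI j hj).1
    have hej := hspec j hj
    simp only [insert_subset_iff, singleton_subset_iff, mem_Icc]
    omega
  have hE : ∀ S, (∃ j ∈ I, ({j.2, e j} : Finset ℕ) ⊆ S) →
      S ∈ {S : Finset ℕ | IsSchur ((↑A ∪ ↑S : Set ℕ))} := by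
    rintro S ⟨j, hj, hjS⟩
    exact isSchur_of_schurPartner Set.subset_union_left (hxA j hj) (hI j hj).2
      (Or.inr (hjS (mem_insert_self _ _))) (Or.inr (hjS (mem_insert_of_mem (mem_singleton_self _))))
  have hμ : ∑ j ∈ I, p ^ #({j.2, e j} : Finset ℕ) = #X * κ * p ^ 2 := by
    rw [sum_congr rfl fun j hj => by rw [card_pair (he j hj).1.ne], sum_const, nsmul_eq_mul,
      hIcard]
    push_cast
    ring
  have hμpos : (0 : ℝ) < #X * κ * p ^ 2 := by
    have : (1 : ℝ) ≤ κ := by exact_mod_cast hκ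
    have : (0 : ℝ) < #X := by exact_mod_cast hX.card_pos
    positivity
  have hvar : ∑ i ∈ I, ∑ j ∈ I, p ^ #(({i.2, e i} : Finset ℕ) ∪ {j.2, e j}) ≤
      (#X * κ * p ^ 2) ^ 2 + #X * κ * p ^ 2 * (2 + 6 * #X * p) := by
    have himage : (#(I.image Prod.fst) : ℝ) ≤ #X := by exact_mod_cast card_le_card hIX
    refine (sum_sum_pow_card_union_le hp₀.le hp₁ he).trans ?_
    rw [hIcard]
    push_cast
    gcongr
  have key := one_sub_div_le_randProb hp₀.le hp₁ hT hE (c := 2 + 6 * #X * p) (by positivity)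
    (hμ ▸ hμpos) (hμ ▸ hvar)
  convert key using 2
  rw [hμ]
  field_simp

theorem div_max_inv_le_mul {q a b : ℝ} (hq : 0 ≤ q) (hb : 0 < b) : q / max a b⁻¹ ≤ b * q :=
  calc _ ≤ q / b⁻¹ := div_le_div_of_nonneg_left hq (inv_pos.mpr hb) (le_max_right _ _)
    _ = b * q := by rw [div_inv_eq_mul, mul_comm]

theorem sq_div_max_rpow_neg_half_le {q L c : ℝ} (hq : 0 ≤ q) (hL : 0 < L) :
    (q / max (L ^ (-(1 : ℝ) / 2)) c) ^ 2 ≤ L * q ^ 2 := by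
  have hpos := Real.rpow_pos_of_pos hL (-(1 : ℝ) / 2)
  calc _ ≤ (q / L ^ (-(1 : ℝ) / 2)) ^ 2 :=
        pow_le_pow_left₀ (div_nonneg hq (hpos.le.trans (le_max_left _ _)))
          (div_le_div_of_nonneg_left hq hpos (le_max_left _ _)) 2
    _ = L * q ^ 2 := by
        rw [div_pow, ← Real.rpow_natCast (L ^ _), ← Real.rpow_mul hL.le]
        norm_num [Real.rpow_neg_one]
        ring

/-- Lemma 9: if `X n ⊆ A n ⊆ [n]` with `|X n| = λ(n)`, each `x ∈ X n`
has a set `D_x` of `κ(n) ≥ 2` positive common differences of 4-APs in `S⁺_{A n}(x)` or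
`S⁻_{A n}(x)`, and `p = ω(max{(λ(n)·κ(n))^{-1/2}, κ(n)⁻¹})`, then the probability that
`A n ∪ [n]_{p(n)}` is Schur tends to `1`. -/
theorem stmt10 (lam kap : ℕ → ℕ) (A X : ℕ → Finset ℕ) (p : ℕ → ℝ)
    (h : ∀ᶠ n : ℕ in atTop,
      1 ≤ lam n ∧ 2 ≤ kap n ∧ A n ⊆ Finset.Icc 1 n ∧ X n ⊆ A n ∧
      (X n).card = lam n ∧
      ∀ x ∈ X n, ∃ D : Finset ℕ, D.card = kap n ∧ ∀ d ∈ D, 1 ≤ d ∧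
        (HasAPWithDiff (Splus (A n) x) d ∨ HasAPWithDiff (Sminus (A n) x) d))
    (hp : ∀ n, p n ∈ Set.Icc (0 : ℝ) 1)
    (hpω : Tendsto (fun n =>
        p n / max (((lam n : ℝ) * (kap n : ℝ)) ^ (-(1 : ℝ) / 2)) ((kap n : ℝ)⁻¹))
      atTop atTop) :
    Tendsto (fun n => randProb n (p n)
        {S : Finset ℕ | IsSchur ((↑(A n) ∪ ↑S : Set ℕ))})
      atTop (nhds 1) := by
  have hκp : Tendsto (fun n => (kap n : ℝ) * p n) atTop atTop := by
    refine tendsto_atTop_mono' _ ?_ hpω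
    filter_upwards [h] with n hn
    exact div_max_inv_le_mul (hp n).1 (Nat.cast_pos.mpr (zero_lt_two.trans_le hn.2.1))
  have hLp : Tendsto (fun n => (lam n : ℝ) * kap n * p n ^ 2) atTop atTop := by
    refine tendsto_atTop_mono' _ ?_ ((tendsto_pow_atTop two_ne_zero).comp hpω)
    filter_upwards [h] with n hn
    exact sq_div_max_rpow_neg_half_le (hp n).1
      (mul_pos (Nat.cast_pos.mpr hn.1) (Nat.cast_pos.mpr (zero_lt_two.trans_le hn.2.1)))
  have hlower : Tendsto (fun n => 1 - (2 / ((lam n : ℝ) * kap n * p n ^ 2) + 6 / (kap n * p n)))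
      atTop (nhds 1) := by
    simpa [div_eq_mul_inv] using tendsto_const_nhds.sub
      ((hLp.inv_tendsto_atTop.const_mul 2).add (hκp.inv_tendsto_atTop.const_mul 6))
  refine tendsto_of_tendsto_of_tendsto_of_le_of_le' hlower tendsto_const_nhds ?_
    (Eventually.of_forall fun n => randProb_le_one (hp n).1 (hp n).2 _)
  filter_upwards [h, hpω.eventually_gt_atTop 0] with n hn hpos
  obtain ⟨hlam, hκ, hA, hXA, hX, hD⟩ := hn
  have hp₀ : 0 < p n := (hp n).1.lt_of_ne fun h0 => by simp [← h0] at hpos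
  have hXne : (X n).Nonempty := card_pos.mp (by omega)
  simpa [hX] using one_sub_le_randProb_isSchur hp₀ (hp n).2 hXne (by omega) hA hXA hD
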